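/- arXiv:math/0703642 — 5 statements merged into one kernel-verified Lean document; each statement's English description precedes it below -/
import Mathlib

section
/- Let X and Y be real Hilbert spaces and let i : Y → X be a continuous linear map which is injective and has dense range. Let w : X → Y satisfy ⟨v, w(u)⟩_Y = ⟨i v, u⟩_X for all u ∈ X, v ∈ Y, and set B := i ∘ w : X → X. Let S : X → X be a bounded self-adjoint nonnegative linear operator with S ∘ S = B. Then: (a) S is injective; (b) the range of S equals the range of i; and (c) for all a, b ∈ Y, if x, y ∈ X are the (unique) elements with S x = i a and S y = i b, then ⟨a, b⟩_Y = ⟨x, y⟩_X. (In other words, Y coincides with the space X^{1/2} = R(B^{1/2}) and its inner product is ⟨u, v⟩_{1/2} = ⟨B^{-1/2}u, B^{-1/2}v⟩_X.) -/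
open scoped InnerProductSpace
open Filter Topology

/-- Cauchy-sequence transfer along a distance-nonincreasing correspondence. -/
private lemma stmt2_cauchy_transfer {X E F : Type*} [PseudoMetricSpace E] [MetricSpace F]
    [CompleteSpace F] (f : X → E) (g : X → F)
    (hiso : ∀ u u', dist (g u) (g u') ≤ dist (f u) (f u'))
    (u : ℕ → X) (e : E) (hf : Filter.Tendsto (fun n => f (u n)) Filter.atTop (nhds e)) :
    ∃ z, Filter.Tendsto (fun n => g (u n)) Filter.atTop (nhds z) := by
  have hc : CauchySeq fun n => g (u n) := by
    have h1 : CauchySeq fun n => f (u n) := hf.cauchySeq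
    rw [Metric.cauchySeq_iff] at h1 ⊢
    intro ε hε
    obtain ⟨N, hN⟩ := h1 ε hε
    exact ⟨N, fun m hm n hn => lt_of_le_of_lt (hiso _ _) (hN m hm n hn)⟩
  exact cauchySeq_tendsto_of_complete hc

/-- Let `X`, `Y` be real Hilbert spaces, `i : Y → X` continuous linear,
injective with dense range. Let `w : X → Y` satisfy `⟪v, w u⟫_Y = ⟪i v, u⟫_X` for all
`u ∈ X`, `v ∈ Y`, and set `B := i ∘ w`. Let `S : X → X` be a bounded self-adjoint
nonnegative linear operator with `S ∘ S = B`. Then (a) `S` is injective; (b) the range of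
`S` equals the range of `i`; (c) for all `a b ∈ Y`, if `x, y ∈ X` satisfy `S x = i a` and
`S y = i b`, then `⟪a, b⟫_Y = ⟪x, y⟫_X`. -/
theorem stmt2 {X Y : Type*}
    [NormedAddCommGroup X] [InnerProductSpace ℝ X] [CompleteSpace X]
    [NormedAddCommGroup Y] [InnerProductSpace ℝ Y] [CompleteSpace Y]
    (i : Y →L[ℝ] X) (hinj : Function.Injective i) (hdense : DenseRange i)
    (w : X → Y) (hw : ∀ (u : X) (v : Y), ⟪v, w u⟫_ℝ = ⟪i v, u⟫_ℝ)
    (S : X →L[ℝ] X)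
    (hSsa : ∀ x y : X, ⟪S x, y⟫_ℝ = ⟪x, S y⟫_ℝ)
    (hSpos : ∀ x : X, 0 ≤ ⟪S x, x⟫_ℝ)
    (hSB : ∀ u : X, S (S u) = i (w u)) :
    Function.Injective S ∧
    Set.range S = Set.range i ∧
    (∀ (a b : Y) (x y : X), S x = i a → S y = i b → ⟪a, b⟫_ℝ = ⟪x, y⟫_ℝ) := by
  -- key identity : ⟪w u, w v⟫ = ⟪S u, S v⟫
  have key : ∀ u v : X, ⟪w u, w v⟫_ℝ = ⟪S u, S v⟫_ℝ := by
    intro u v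
    calc ⟪w u, w v⟫_ℝ = ⟪i (w u), v⟫_ℝ := hw v (w u)
      _ = ⟪S (S u), v⟫_ℝ := by rw [hSB]
      _ = ⟪S u, S v⟫_ℝ := hSsa (S u) v
  -- w is linear
  have hadd : ∀ u u' : X, w (u + u') = w u + w u' := by
    intro u u'
    apply ext_inner_left ℝ
    intro v
    simp only [hw, inner_add_right]
  have hsmul : ∀ (c : ℝ) (u : X), w (c • u) = c • w u := by
    intro c u
    apply ext_inner_left ℝ
    intro v
    rw [hw, real_inner_smul_right, real_inner_smul_right, hw]
  have hsub : ∀ u u' : X, w (u - u') = w u - w u' := by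
    intro u u'
    have := hadd (u - u') u'
    rw [sub_add_cancel] at this
    rw [this]; abel
  -- the distance transfer estimates
  have hnorm : ∀ u : X, ‖w u‖ = ‖S u‖ := by
    intro u
    rw [norm_eq_sqrt_real_inner (w u), norm_eq_sqrt_real_inner (S u), key]
  have hdistSw : ∀ u u' : X, dist (S u) (S u') = dist (w u) (w u') := by
    intro u u'
    rw [dist_eq_norm, dist_eq_norm, ← map_sub, ← hsub, hnorm]
  -- (a) S is injective
  have hSinj : Function.Injective S := by
    have h0 : ∀ x : X, S x = 0 → x = 0 := by
      intro x hx
      have hwx : w x = 0 := by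
        have h1 : ⟪w x, w x⟫_ℝ = 0 := by rw [key, hx, inner_zero_right]
        exact inner_self_eq_zero.mp h1
      have heq : Set.EqOn (fun z : X => ⟪z, x⟫_ℝ) (fun _ => (0 : ℝ)) (Set.range i) := by
        rintro _ ⟨v, rfl⟩
        simp only
        rw [← hw x v, hwx, inner_zero_right]
      have hx0 : ⟪x, x⟫_ℝ = 0 := by
        have hmem : x ∈ closure (Set.range i) := by rw [hdense.closure_range]; trivial
        have := heq.closure (continuous_id.inner continuous_const) continuous_const hmem
        simpa using this
      exact inner_self_eq_zero.mp hx0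
    intro a b hab
    have : S (a - b) = 0 := by rw [map_sub, hab, sub_self]
    exact sub_eq_zero.mp (h0 _ this)
  -- density of range w in Y
  have hWdense : Dense (Set.range w) := by
    let W : X →ₗ[ℝ] Y := { toFun := w, map_add' := hadd, map_smul' := hsmul }
    have hbot : (LinearMap.range W)ᗮ = ⊥ := by
      rw [Submodule.eq_bot_iff]
      intro z hz
      have hz' : ∀ u : X, ⟪w u, z⟫_ℝ = 0 := fun u => hz (w u) (LinearMap.mem_range_self W u)
      have hiz : i z = 0 := by
        apply ext_inner_right ℝ
        intro u
        rw [← hw u z, inner_zero_left, real_inner_comm]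
        exact hz' u
      exact hinj (by rw [hiz, map_zero])
    have htop : (LinearMap.range W).topologicalClosure = ⊤ := by
      rw [← Submodule.orthogonal_orthogonal_eq_closure, hbot, Submodule.bot_orthogonal_eq_top]
    have hd : Dense ((LinearMap.range W : Submodule ℝ Y) : Set Y) :=
      Submodule.dense_iff_topologicalClosure_eq_top.mpr htop
    exact LinearMap.coe_range W ▸ hd
  -- density of range S in X
  have hSdense : Dense (Set.range S) := by
    have hbot : (LinearMap.range (S : X →ₗ[ℝ] X))ᗮ = ⊥ := by
      rw [Submodule.eq_bot_iff]
      intro z hz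
      have hz' : ∀ u : X, ⟪S u, z⟫_ℝ = 0 := fun u => hz (S u) ⟨u, rfl⟩
      have hSz : S z = 0 := by
        apply ext_inner_right ℝ
        intro u
        rw [hSsa z u, inner_zero_left, real_inner_comm]
        exact hz' u
      exact hSinj (by rw [hSz, map_zero])
    have htop : (LinearMap.range (S : X →ₗ[ℝ] X)).topologicalClosure = ⊤ := by
      rw [← Submodule.orthogonal_orthogonal_eq_closure, hbot, Submodule.bot_orthogonal_eq_top]
    have hd : Dense ((LinearMap.range (S : X →ₗ[ℝ] X) : Submodule ℝ X) : Set X) :=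
      Submodule.dense_iff_topologicalClosure_eq_top.mpr htop
    exact LinearMap.coe_range (S : X →ₗ[ℝ] X) ▸ hd
  -- approximation: if S x = i a, then there is a sequence v with S (v n) → x and w (v n) → a
  have approx : ∀ (a : Y) (x : X), S x = i a →
      ∃ v : ℕ → X, Filter.Tendsto (fun n => S (v n)) Filter.atTop (nhds x) ∧
        Filter.Tendsto (fun n => w (v n)) Filter.atTop (nhds a) := by
    intro a x hxa
    have hx : x ∈ closure (Set.range S) := by rw [hSdense.closure_eq]; trivial
    obtain ⟨ySeq, hymem, hytend⟩ := mem_closure_iff_seq_limit.mp hx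
    choose v hv using hymem
    have hvt : Filter.Tendsto (fun n => S (v n)) Filter.atTop (nhds x) := by
      simpa only [hv] using hytend
    obtain ⟨a', hat⟩ := stmt2_cauchy_transfer (fun u => S u) w
      (fun u u' => le_of_eq (hdistSw u u').symm) v x hvt
    have h1 : Filter.Tendsto (fun n => i (w (v n))) Filter.atTop (nhds (i a')) :=
      (i.continuous.tendsto a').comp hat
    have h2 : Filter.Tendsto (fun n => S (S (v n))) Filter.atTop (nhds (S x)) :=
      (S.continuous.tendsto x).comp hvt
    have h3 : (fun n => S (S (v n))) = fun n => i (w (v n)) := funext fun n => hSB (v n)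
    rw [h3] at h2
    have hia : i a' = S x := tendsto_nhds_unique h1 h2
    have haa : a' = a := hinj (hia.trans hxa)
    exact ⟨v, hvt, haa ▸ hat⟩
  -- (b) range S = range i
  have hrange : Set.range S = Set.range i := by
    apply Set.Subset.antisymm
    · rintro _ ⟨x, rfl⟩
      have hx : x ∈ closure (Set.range S) := by rw [hSdense.closure_eq]; trivial
      obtain ⟨ySeq, hymem, hytend⟩ := mem_closure_iff_seq_limit.mp hx
      choose v hv using hymem
      have hvt : Filter.Tendsto (fun n => S (v n)) Filter.atTop (nhds x) := by
        simpa only [hv] using hytend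
      obtain ⟨a, hat⟩ := stmt2_cauchy_transfer (fun u => S u) w
        (fun u u' => le_of_eq (hdistSw u u').symm) v x hvt
      have h1 : Filter.Tendsto (fun n => i (w (v n))) Filter.atTop (nhds (i a)) :=
        (i.continuous.tendsto a).comp hat
      have h2 : Filter.Tendsto (fun n => S (S (v n))) Filter.atTop (nhds (S x)) :=
        (S.continuous.tendsto x).comp hvt
      have h3 : (fun n => S (S (v n))) = fun n => i (w (v n)) := funext fun n => hSB (v n)
      rw [h3] at h2
      exact ⟨a, tendsto_nhds_unique h1 h2⟩
    · rintro _ ⟨a, rfl⟩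
      have ha : a ∈ closure (Set.range w) := by rw [hWdense.closure_eq]; trivial
      obtain ⟨ySeq, hymem, hytend⟩ := mem_closure_iff_seq_limit.mp ha
      choose v hv using hymem
      have hvt : Filter.Tendsto (fun n => w (v n)) Filter.atTop (nhds a) := by
        simpa only [hv] using hytend
      obtain ⟨z, hzt⟩ := stmt2_cauchy_transfer w (fun u => S u)
        (fun u u' => le_of_eq (hdistSw u u')) v a hvt
      have h1 : Filter.Tendsto (fun n => i (w (v n))) Filter.atTop (nhds (i a)) :=
        (i.continuous.tendsto a).comp hvt
      have h2 : Filter.Tendsto (fun n => S (S (v n))) Filter.atTop (nhds (S z)) :=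
        (S.continuous.tendsto z).comp hzt
      have h3 : (fun n => S (S (v n))) = fun n => i (w (v n)) := funext fun n => hSB (v n)
      rw [h3] at h2
      exact ⟨z, tendsto_nhds_unique h2 h1⟩
  refine ⟨hSinj, hrange, ?_⟩
  -- (c)
  intro a b x y hxa hyb
  obtain ⟨v, hv1, hv2⟩ := approx a x hxa
  obtain ⟨u, hu1, hu2⟩ := approx b y hyb
  have hL : Filter.Tendsto (fun n => ⟪w (v n), w (u n)⟫_ℝ) Filter.atTop (nhds ⟪a, b⟫_ℝ) :=
    hv2.inner hu2
  have hR : Filter.Tendsto (fun n => ⟪S (v n), S (u n)⟫_ℝ) Filter.atTop (nhds ⟪x, y⟫_ℝ) :=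
    hv1.inner hu1
  have heq : (fun n => ⟪w (v n), w (u n)⟫_ℝ) = fun n => ⟪S (v n), S (u n)⟫_ℝ :=
    funext fun n => key _ _
  rw [heq] at hL
  exact tendsto_nhds_unique hL hR
end

section
/- Let Z be a real Banach space and (T_t)_{t≥0} a strongly continuous semigroup of bounded linear operators on Z. Let D(B) be the set of all z ∈ Z for which the map t ↦ T_t z is right-differentiable at t = 0, and for z ∈ D(B) set B z := −(d/dt)|_{t=0⁺} T_t z (so that formally T_t = e^{−Bt}). Let U be open in Z, let Y be a real normed space, and let V : U → Y be continuous at each point of U and Fréchet differentiable at each point of U ∩ D(B). Let W : U × Z → Y be continuous and such that DV(z)(−B z + w) = W(z, w) for all z ∈ U ∩ D(B) and w ∈ Z. Let τ > 0, I := [0, τ], z̄ ∈ U, let g : I → Z be continuous and let z : I → U satisfy z(t) = T_t z̄ + ∫₀ᵗ T_{t−s} g(s) ds (Bochner integral in Z) for all t ∈ I. Then the map V ∘ z : I → Y is differentiable on I (one-sidedly at the endpoints) and (V ∘ z)'(t) = W(z(t), g(t)) for every t ∈ I. -/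
/-!
`V ∘ z` cannot be differentiated directly: `z t` need not lie in the domain of `B`. We regularize
with the time averages `A_h = h⁻¹ ∫₀ʰ T σ dσ`, which commute with the semigroup and map `Z` into
`D(B)`. By the restart identity `z u = T (u - s) (z s) + ∫ₛᵘ T (u - r) (g r) dr`, the curve
`A_h ∘ z` is right-differentiable with derivative `-B (A_h z) + A_h g`, so `V ∘ A_h ∘ z` has right
derivative `W (A_h z, A_h g)`. By Banach–Steinhaus, `(h, y) ↦ A_h y` is jointly continuous with
`A_0 = id`, so these derivatives are uniformly close to `W (z t₀, g t₀)` for small `h` and `s` near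
`t₀`. The mean value inequality turns this into a difference-quotient estimate for `V ∘ A_h ∘ z`
that is uniform in `h` and survives the limit `h → 0⁺`.
-/

open MeasureTheory intervalIntegral

open Set Filter Topology

theorem ContinuousLinearMap.continuousAt_uncurry_apply_of_eventually_norm_le
    {𝕜 X E F : Type*} [NontriviallyNormedField 𝕜] [TopologicalSpace X]
    [NormedAddCommGroup E] [NormedSpace 𝕜 E] [NormedAddCommGroup F] [NormedSpace 𝕜 F]
    {A : X → E →L[𝕜] F} {x₀ : X} {M : ℝ} (hM : ∀ᶠ x in 𝓝 x₀, ‖A x‖ ≤ M)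
    (hA : ∀ y, ContinuousAt (fun x => A x y) x₀) (y₀ : E) :
    ContinuousAt (fun p : X × E => A p.1 p.2) (x₀, y₀) := by
  have hfar : Tendsto (fun p : X × E => ‖A p.1 y₀ - A x₀ y₀‖) (𝓝 (x₀, y₀)) (𝓝 0) :=
    tendsto_iff_norm_sub_tendsto_zero.1 ((hA y₀).tendsto.comp continuousAt_fst)
  have hnear : Tendsto (fun p : X × E => M * ‖p.2 - y₀‖) (𝓝 (x₀, y₀)) (𝓝 0) := by
    have : Continuous fun p : X × E => M * ‖p.2 - y₀‖ := by fun_prop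
    simpa using this.tendsto (x₀, y₀)
  rw [ContinuousAt, tendsto_iff_norm_sub_tendsto_zero]
  refine squeeze_zero_norm' ?_ (by simpa using hnear.add hfar)
  filter_upwards [continuousAt_fst.eventually hM] with p hp
  calc ‖‖A p.1 p.2 - A x₀ y₀‖‖ = ‖A p.1 (p.2 - y₀) + (A p.1 y₀ - A x₀ y₀)‖ := by
        rw [norm_norm, map_sub]; abel_nf
    _ ≤ M * ‖p.2 - y₀‖ + ‖A p.1 y₀ - A x₀ y₀‖ :=
        (norm_add_le _ _).trans (add_le_add_left ((A p.1).le_of_opNorm_le hp _) _)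

theorem hasDerivAt_intervalIntegral_of_continuous_uncurry {E : Type*} [NormedAddCommGroup E]
    [NormedSpace ℝ E] [CompleteSpace E] {φ : ℝ → ℝ → E} (hφ : Continuous (Function.uncurry φ))
    (s : ℝ) :
    HasDerivAt (fun u => ∫ r in s..u, φ u r) (φ s s) s := by
  rw [hasDerivAt_iff_isLittleO, Asymptotics.isLittleO_iff]
  intro c hc
  obtain ⟨δ, hδ, hφδ⟩ := Metric.continuousAt_iff.1 (hφ.continuousAt (x := (s, s))) c hc
  filter_upwards [Metric.ball_mem_nhds s hδ] with u hu
  have hint : IntervalIntegrable (φ u) volume s u :=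
    (hφ.comp (Continuous.prodMk_right u)).intervalIntegrable _ _
  rw [integral_same, sub_zero, ← intervalIntegral.integral_const,
    ← integral_sub hint intervalIntegrable_const, Real.norm_eq_abs]
  refine intervalIntegral.norm_integral_le_of_norm_le_const fun r hr => ?_
  rw [← dist_eq_norm]
  refine (hφδ (x := (u, r)) ?_).le
  have hrs : dist r s ≤ dist u s := by
    simpa [Real.dist_eq] using abs_sub_left_of_mem_uIcc (uIoc_subset_uIcc hr)
  exact max_lt (Metric.mem_ball.1 hu) (hrs.trans_lt (Metric.mem_ball.1 hu))

theorem norm_sub_sub_smul_le_of_hasDerivWithinAt_Ici {E : Type*} [NormedAddCommGroup E]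
    [NormedSpace ℝ E] {f f' : ℝ → E} {s : Set ℝ} (hs : s.OrdConnected) (hf : ContinuousOn f s)
    (hf' : ∀ x ∈ s, HasDerivWithinAt f (f' x) (s ∩ Ici x) x) {w : E} {C : ℝ}
    (hC : ∀ x ∈ s, ‖f' x - w‖ ≤ C) {x y : ℝ} (hx : x ∈ s) (hy : y ∈ s) :
    ‖f y - f x - (y - x) • w‖ ≤ C * |y - x| := by
  wlog hxy : x ≤ y generalizing x y
  · have e : -(f y - f x - (y - x) • w) = f x - f y - (x - y) • w := by
      rw [sub_smul, sub_smul]; abel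
    rw [← norm_neg, e, abs_sub_comm]
    exact this hy hx (le_of_not_ge hxy)
  have hsub : Icc x y ⊆ s := hs.out hx hy
  have hderiv : ∀ u ∈ Ico x y,
      HasDerivWithinAt (fun u => f u - u • w) (f' u - w) (Ici u) u := by
    intro u hu
    have hmem : s ∩ Ici u ∈ 𝓝[≥] u :=
      mem_of_superset (Icc_mem_nhdsGE hu.2) fun v hv => ⟨hsub ⟨hu.1.trans hv.1, hv.2⟩, hv.1⟩
    exact ((hf' u (hsub (Ico_subset_Icc_self hu))).mono_of_mem_nhdsWithin hmem).sub
      (by simpa using (hasDerivWithinAt_id u (Ici u)).smul_const w)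
  have key := norm_image_sub_le_of_norm_deriv_right_le_segment (f := fun u => f u - u • w)
    ((hf.mono hsub).sub (continuous_id.smul continuous_const).continuousOn) hderiv
    (fun u hu => hC u (hsub (Ico_subset_Icc_self hu))) y (right_mem_Icc.2 hxy)
  rw [abs_of_nonneg (sub_nonneg.2 hxy), sub_smul]
  convert key using 2
  abel

theorem hasDerivWithinAt_of_tendsto_of_hasDerivWithinAt_Ici {E : Type*} [NormedAddCommGroup E]
    [NormedSpace ℝ E] {F G : ℝ → ℝ → E} {f : ℝ → E} {I : Set ℝ} (hI : I.OrdConnected)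
    {l : Filter ℝ} [l.NeBot] {t₀ : ℝ} (ht₀ : t₀ ∈ I) {w : E}
    (hF : ∀ t ∈ I, Tendsto (fun h => F h t) l (𝓝 (f t)))
    (hFG : ∀ᶠ p in l ×ˢ 𝓝[I] t₀, ContinuousWithinAt (F p.1) I p.2 ∧
      HasDerivWithinAt (F p.1) (G p.1 p.2) (I ∩ Ici p.2) p.2)
    (hG : Tendsto (Function.uncurry G) (l ×ˢ 𝓝[I] t₀) (𝓝 w)) :
    HasDerivWithinAt f w I t₀ := by
  refine hasDerivWithinAt_iff_isLittleO.2 (Asymptotics.isLittleO_iff.2 fun c hc => ?_)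
  obtain ⟨P, hP, Q, hQ, hPQ⟩ :=
    eventually_prod_iff.1 (hFG.and (hG.eventually (Metric.closedBall_mem_nhds w hc)))
  obtain ⟨δ, hδ, hδQ⟩ := Metric.mem_nhdsWithin_iff.1 hQ
  rw [Real.ball_eq_Ioo] at hδQ
  have hS : Ioo (t₀ - δ) (t₀ + δ) ∩ I ∈ 𝓝[I] t₀ :=
    Metric.mem_nhdsWithin_iff.2 ⟨δ, hδ, by rw [Real.ball_eq_Ioo]⟩
  filter_upwards [hS] with t ht
  have hest : ∀ᶠ h in l, ‖F h t - F h t₀ - (t - t₀) • w‖ ≤ c * |t - t₀| := by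
    filter_upwards [hP] with h hh
    have hgood := fun u (hu : u ∈ Ioo (t₀ - δ) (t₀ + δ) ∩ I) => hPQ hh (hδQ hu)
    refine norm_sub_sub_smul_le_of_hasDerivWithinAt_Ici (ordConnected_Ioo.inter hI)
      (fun u hu => (hgood u hu).1.1.mono inter_subset_right)
      (fun u hu => (hgood u hu).1.2.mono (inter_subset_inter_left _ inter_subset_right))
      (fun u hu => mem_closedBall_iff_norm.1 (hgood u hu).2)
      ⟨⟨by linarith, by linarith⟩, ht₀⟩ ht
  rw [Real.norm_eq_abs]
  exact le_of_tendsto (((hF t ht.2).sub (hF t₀ ht₀)).sub_const _).norm hest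

section Semigroup

variable {Z : Type*} [NormedAddCommGroup Z] [NormedSpace ℝ Z] {T : ℝ → Z →L[ℝ] Z}

theorem continuous_apply_max_zero (hTc : ∀ z : Z, ContinuousOn (fun t => T t z) (Ici 0))
    (x : Z) : Continuous fun t => T (max t 0) x :=
  (hTc x).comp_continuous (continuous_id.max continuous_const) fun _ => mem_Ici.2 (le_max_right _ _)

theorem continuous_uncurry_apply_max_zero [CompleteSpace Z]
    (hTc : ∀ z : Z, ContinuousOn (fun t => T t z) (Ici 0)) :
    Continuous fun p : ℝ × Z => T (max p.1 0) p.2 := by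
  refine continuous_iff_continuousAt.2 fun ⟨t₀, x₀⟩ => ?_
  obtain ⟨M, hM⟩ : ∃ M, ∀ t : Icc (t₀ - 1) (t₀ + 1), ‖T (max t 0)‖ ≤ M :=
    banach_steinhaus fun x => (isCompact_Icc.exists_bound_of_continuousOn
      (continuous_apply_max_zero hTc x).continuousOn).imp fun _ hC t => hC t t.2
  refine ContinuousLinearMap.continuousAt_uncurry_apply_of_eventually_norm_le (M := M) ?_
    (fun x => (continuous_apply_max_zero hTc x).continuousAt) x₀
  filter_upwards [Icc_mem_nhds (sub_one_lt t₀) (lt_add_one t₀)] with t ht using hM ⟨t, ht⟩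

theorem semigroup_apply_comm (hTadd : ∀ s t : ℝ, 0 ≤ s → 0 ≤ t → T (s + t) = (T s).comp (T t))
    {s t : ℝ} (hs : 0 ≤ s) (ht : 0 ≤ t) (x : Z) : T s (T t x) = T t (T s x) := by
  rw [← ContinuousLinearMap.comp_apply, ← hTadd s t hs ht, add_comm, hTadd t s ht hs,
    ContinuousLinearMap.comp_apply]

theorem intervalIntegrable_apply_max_mul_zero
    (hTc : ∀ z : Z, ContinuousOn (fun t => T t z) (Ici 0)) (h : ℝ) (y : Z) (a b : ℝ) :
    IntervalIntegrable (fun θ => T (max (h * θ) 0) y) volume a b :=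
  ((continuous_apply_max_zero hTc y).comp (continuous_const_mul h)).intervalIntegrable _ _

variable [CompleteSpace Z] (hTc : ∀ z : Z, ContinuousOn (fun t => T t z) (Ici 0))

/-- The time average `h⁻¹ ∫₀ʰ T σ dσ`, written as `∫₀¹ T (h θ) dθ` so that it is jointly
continuous in `(h, y)` and equal to the identity at `h = 0`. -/
noncomputable def timeAverage (h : ℝ) : Z →L[ℝ] Z where
  toFun y := ∫ θ in (0 : ℝ)..1, T (max (h * θ) 0) y
  map_add' y₁ y₂ := by
    simp only [map_add]
    exact integral_add (intervalIntegrable_apply_max_mul_zero hTc h y₁ 0 1)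
      (intervalIntegrable_apply_max_mul_zero hTc h y₂ 0 1)
  map_smul' c y := by
    simp only [map_smul, RingHom.id_apply]
    exact integral_smul c _
  cont := continuous_parametric_intervalIntegral_of_continuous'
    (f := fun y θ => T (max (h * θ) 0) y)
    ((continuous_uncurry_apply_max_zero hTc).comp
      (by fun_prop : Continuous fun p : Z × ℝ => (h * p.2, p.1))) 0 1

theorem timeAverage_apply (h : ℝ) (y : Z) :
    timeAverage hTc h y = ∫ θ in (0 : ℝ)..1, T (max (h * θ) 0) y := rfl

theorem continuous_uncurry_timeAverage :
    Continuous fun p : ℝ × Z => timeAverage hTc p.1 p.2 :=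
  continuous_parametric_intervalIntegral_of_continuous'
    (f := fun (p : ℝ × Z) θ => T (max (p.1 * θ) 0) p.2)
    ((continuous_uncurry_apply_max_zero hTc).comp
      (by fun_prop : Continuous fun q : (ℝ × Z) × ℝ => (q.1.1 * q.2, q.1.2))) 0 1

theorem timeAverage_zero_apply (hT0 : T 0 = ContinuousLinearMap.id ℝ Z) (y : Z) :
    timeAverage hTc 0 y = y := by
  simp [timeAverage_apply, hT0]

theorem tendsto_timeAverage (hT0 : T 0 = ContinuousLinearMap.id ℝ Z) {X : Type*} {l : Filter X}
    {u : X → Z} {y : Z} (hu : Tendsto u l (𝓝 y)) :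
    Tendsto (fun p : ℝ × X => timeAverage hTc p.1 (u p.2)) (𝓝 0 ×ˢ l) (𝓝 y) := by
  have := ((continuous_uncurry_timeAverage hTc).tendsto (0, y)).comp
    (by rw [nhds_prod_eq]; exact tendsto_id.prodMap hu)
  rwa [Function.comp_def, timeAverage_zero_apply hTc hT0] at this

theorem tendsto_timeAverage_apply (hT0 : T 0 = ContinuousLinearMap.id ℝ Z) (y : Z) :
    Tendsto (fun h => timeAverage hTc h y) (𝓝 0) (𝓝 y) := by
  have := ((continuous_uncurry_timeAverage hTc).comp (Continuous.prodMk_left y)).tendsto 0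
  simpa only [Function.comp_def, timeAverage_zero_apply hTc hT0] using this

theorem timeAverage_apply_eq_smul_integral {h : ℝ} (hh : h ≠ 0) (y : Z) :
    timeAverage hTc h y = h⁻¹ • ∫ σ in (0 : ℝ)..h, T (max σ 0) y := by
  rw [timeAverage_apply]
  simpa using integral_comp_mul_left (fun σ => T (max σ 0) y) (a := 0) (b := 1) hh

theorem timeAverage_apply_semigroup
    (hTadd : ∀ s t : ℝ, 0 ≤ s → 0 ≤ t → T (s + t) = (T s).comp (T t)) (h : ℝ) {s : ℝ}
    (hs : 0 ≤ s) (y : Z) : timeAverage hTc h (T s y) = T s (timeAverage hTc h y) := by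
  rw [timeAverage_apply, timeAverage_apply,
    ← (T s).intervalIntegral_comp_comm (intervalIntegrable_apply_max_mul_zero hTc h y 0 1)]
  exact integral_congr fun θ _ => semigroup_apply_comm hTadd (le_max_right _ _) hs y

theorem hasDerivWithinAt_semigroup_timeAverage
    (hTadd : ∀ s t : ℝ, 0 ≤ s → 0 ≤ t → T (s + t) = (T s).comp (T t)) {h : ℝ} (hh : 0 < h)
    (x : Z) :
    HasDerivWithinAt (fun t => T t (timeAverage hTc h x)) (h⁻¹ • (T h x - T 0 x)) (Ici 0) 0 := by
  set F : ℝ → Z := fun v => ∫ σ in (0 : ℝ)..v, T (max σ 0) x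
  have hcont := continuous_apply_max_zero hTc x
  have hF : ∀ v, HasDerivAt F (T (max v 0) x) v := fun v =>
    (hcont.integral_hasStrictDerivAt 0 v).hasDerivAt
  have hshift : ∀ t ∈ Ici (0 : ℝ), T t (timeAverage hTc h x) = h⁻¹ • (F (t + h) - F t) := by
    intro t (ht : 0 ≤ t)
    rw [timeAverage_apply_eq_smul_integral hTc hh.ne', map_smul,
      ← (T t).intervalIntegral_comp_comm (hcont.intervalIntegrable _ _),
      integral_interval_sub_left (hcont.intervalIntegrable _ _) (hcont.intervalIntegrable _ _),
      integral_congr (g := fun σ => T (max (t + σ) 0) x) fun σ hσ => ?_,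
      integral_comp_add_left (fun σ => T (max σ 0) x), add_zero, add_comm]
    rw [uIcc_of_le hh.le] at hσ
    simp only [max_eq_left hσ.1, max_eq_left (add_nonneg ht hσ.1), hTadd t σ ht hσ.1,
      ContinuousLinearMap.comp_apply]
  have hd := (((hF (0 + h)).comp_add_const 0 h).sub (hF 0)).const_smul h⁻¹
  rw [zero_add, max_eq_left hh.le, max_self] at hd
  exact hd.hasDerivWithinAt.congr_of_mem hshift self_mem_Ici

end Semigroup

section MildSolution

variable {Z : Type*} [NormedAddCommGroup Z] [NormedSpace ℝ Z]
  {T : ℝ → Z →L[ℝ] Z} {g z : ℝ → Z} {zbar : Z} {τ : ℝ}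

theorem integral_apply_sub_eq_integral_apply_max {a t : ℝ} (hat : a ≤ t) :
    ∫ r in a..t, T (t - r) (g r) = ∫ r in a..t, T (max (t - r) 0) (g r) :=
  integral_congr fun r hr => by
    rw [uIcc_of_le hat] at hr
    rw [max_eq_left (sub_nonneg.2 hr.2)]

theorem exists_continuous_forcing_of_mild (hτ : 0 ≤ τ)
    (hg : ContinuousOn g (Icc 0 τ))
    (hz : ∀ t ∈ Icc 0 τ, z t = T t zbar + ∫ r in (0 : ℝ)..t, T (t - r) (g r)) :
    ∃ g' : ℝ → Z, Continuous g' ∧ EqOn g' g (Icc 0 τ) ∧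
      ∀ t ∈ Icc 0 τ, z t = T t zbar + ∫ r in (0 : ℝ)..t, T (t - r) (g' r) := by
  refine ⟨IccExtend hτ ((Icc 0 τ).domRestrict g), hg.domRestrict.Icc_extend',
    fun t ht => IccExtend_of_mem _ _ ht, fun t ht => ?_⟩
  rw [hz t ht, integral_congr fun r hr => ?_]
  rw [uIcc_of_le ht.1] at hr
  rw [IccExtend_of_mem _ _ ⟨hr.1, hr.2.trans ht.2⟩, domRestrict_apply]

variable [CompleteSpace Z]

theorem continuous_uncurry_apply_max_sub_zero
    (hTc : ∀ z : Z, ContinuousOn (fun t => T t z) (Ici 0)) (hg : Continuous g) :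
    Continuous fun p : ℝ × ℝ => T (max (p.1 - p.2) 0) (g p.2) :=
  (continuous_uncurry_apply_max_zero hTc).comp
    ((continuous_fst.sub continuous_snd).prodMk (hg.comp continuous_snd))

theorem continuousOn_of_mild (hTc : ∀ z : Z, ContinuousOn (fun t => T t z) (Ici 0))
    (hg : Continuous g)
    (hz : ∀ t ∈ Icc 0 τ, z t = T t zbar + ∫ r in (0 : ℝ)..t, T (t - r) (g r)) :
    ContinuousOn z (Icc 0 τ) := by
  have hcont : Continuous fun t => T (max t 0) zbar + ∫ r in (0 : ℝ)..t, T (max (t - r) 0) (g r) :=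
    (continuous_apply_max_zero hTc zbar).add <|
      continuous_parametric_intervalIntegral_of_continuous (f := fun t r => T (max (t - r) 0) (g r))
        (continuous_uncurry_apply_max_sub_zero hTc hg) continuous_id
  refine hcont.continuousOn.congr fun t ht => ?_
  show z t = T (max t 0) zbar + _
  rw [hz t ht, integral_apply_sub_eq_integral_apply_max ht.1, max_eq_left ht.1]

theorem mild_eq_semigroup_add_integral
    (hTadd : ∀ s t : ℝ, 0 ≤ s → 0 ≤ t → T (s + t) = (T s).comp (T t))
    (hTc : ∀ z : Z, ContinuousOn (fun t => T t z) (Ici 0)) (hg : Continuous g)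
    (hz : ∀ t ∈ Icc 0 τ, z t = T t zbar + ∫ r in (0 : ℝ)..t, T (t - r) (g r))
    {a b : ℝ} (ha : 0 ≤ a) (hab : a ≤ b) (hb : b ≤ τ) :
    z b = T (b - a) (z a) + ∫ r in a..b, T (b - r) (g r) := by
  have hint : ∀ t c d : ℝ, IntervalIntegrable (fun r => T (max (t - r) 0) (g r)) volume c d :=
    fun t _ _ => ((continuous_uncurry_apply_max_sub_zero hTc hg).comp
      (Continuous.prodMk_right t)).intervalIntegrable _ _
  have hsplit : ∫ r in (0 : ℝ)..a, T (max (b - r) 0) (g r)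
      = T (b - a) (∫ r in (0 : ℝ)..a, T (max (a - r) 0) (g r)) := by
    rw [← (T (b - a)).intervalIntegral_comp_comm (hint a 0 a)]
    refine integral_congr fun r hr => ?_
    rw [uIcc_of_le ha] at hr
    have hra : 0 ≤ a - r := sub_nonneg.2 hr.2
    rw [max_eq_left (hra.trans (sub_le_sub_right hab r)), max_eq_left hra,
      ← ContinuousLinearMap.comp_apply, ← hTadd _ _ (sub_nonneg.2 hab) hra, sub_add_sub_cancel]
  have hTb : T b zbar = T (b - a) (T a zbar) := by
    rw [← ContinuousLinearMap.comp_apply, ← hTadd _ _ (sub_nonneg.2 hab) ha, sub_add_cancel]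
  rw [hz b ⟨ha.trans hab, hb⟩, hz a ⟨ha, hab.trans hb⟩, integral_apply_sub_eq_integral_apply_max
    (ha.trans hab), ← integral_add_adjacent_intervals (hint b 0 a) (hint b a b), hsplit,
    integral_apply_sub_eq_integral_apply_max hab, integral_apply_sub_eq_integral_apply_max ha,
    hTb, map_add, add_assoc]

theorem hasDerivWithinAt_apply_mild (hT0 : T 0 = ContinuousLinearMap.id ℝ Z)
    (hTadd : ∀ s t : ℝ, 0 ≤ s → 0 ≤ t → T (s + t) = (T s).comp (T t))
    (hTc : ∀ z : Z, ContinuousOn (fun t => T t z) (Ici 0)) (hg : Continuous g)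
    (hz : ∀ t ∈ Icc 0 τ, z t = T t zbar + ∫ r in (0 : ℝ)..t, T (t - r) (g r))
    (A : Z →L[ℝ] Z) (hA : ∀ t, 0 ≤ t → ∀ y, A (T t y) = T t (A y)) {s : ℝ} (hs : s ∈ Icc 0 τ)
    {d : Z} (hd : HasDerivWithinAt (fun t => T t (A (z s))) d (Ici 0) 0) :
    HasDerivWithinAt (fun u => A (z u)) (d + A (g s)) (Icc s τ) s := by
  have hfree : HasDerivWithinAt (fun u => T (u - s) (A (z s))) d (Ici s) s :=
    hd.scomp_of_eq s ((hasDerivAt_id s).sub_const s).hasDerivWithinAt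
      (fun u (hu : s ≤ u) => sub_nonneg.2 hu) (sub_self s).symm |>.congr_deriv (one_smul ℝ d)
  have hforced : HasDerivAt (fun u => A (∫ r in s..u, T (max (u - r) 0) (g r))) (A (g s)) s := by
    have := hasDerivAt_intervalIntegral_of_continuous_uncurry
      (φ := fun u r => T (max (u - r) 0) (g r)) (continuous_uncurry_apply_max_sub_zero hTc hg) s
    simp only [sub_self, max_self, hT0, ContinuousLinearMap.id_apply] at this
    exact A.hasFDerivAt.comp_hasDerivAt s this
  refine ((hfree.add hforced.hasDerivWithinAt).mono Icc_subset_Ici_self).congr_of_mem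
    (fun u hu => ?_) (left_mem_Icc.2 hs.2)
  rw [mild_eq_semigroup_add_integral hTadd hTc hg hz hs.1 hu.1 hu.2, map_add,
    hA _ (sub_nonneg.2 hu.1), integral_apply_sub_eq_integral_apply_max hu.1]
  rfl

end MildSolution

theorem stmt3_general {Z Y : Type*}
    [NormedAddCommGroup Z] [NormedSpace ℝ Z] [CompleteSpace Z]
    [NormedAddCommGroup Y] [NormedSpace ℝ Y]
    (T : ℝ → Z →L[ℝ] Z)
    (hT0 : T 0 = ContinuousLinearMap.id ℝ Z)
    (hTadd : ∀ s t : ℝ, 0 ≤ s → 0 ≤ t → T (s + t) = (T s).comp (T t))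
    (hTcont : ∀ z : Z, ContinuousOn (fun t => T t z) (Set.Ici (0 : ℝ)))
    (DB : Set Z) (Bop : Z → Z)
    (hDB : ∀ z : Z, z ∈ DB ↔ ∃ d : Z, HasDerivWithinAt (fun t => T t z) d (Set.Ici (0 : ℝ)) 0)
    (hBop : ∀ z ∈ DB, HasDerivWithinAt (fun t => T t z) (-(Bop z)) (Set.Ici (0 : ℝ)) 0)
    (U : Set Z) (hU : IsOpen U)
    (V : Z → Y) (hVcont : ∀ z ∈ U, ContinuousAt V z)
    (DV : Z → Z →L[ℝ] Y) (hDV : ∀ z ∈ U ∩ DB, HasFDerivAt V (DV z) z)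
    (W : Z → Z → Y)
    (hWcont : ContinuousOn (fun p : Z × Z => W p.1 p.2) (U ×ˢ (Set.univ : Set Z)))
    (hVW : ∀ z ∈ U ∩ DB, ∀ w : Z, DV z (-(Bop z) + w) = W z w)
    (τ : ℝ) (zbar : Z)
    (g : ℝ → Z) (hg : ContinuousOn g (Set.Icc 0 τ))
    (z : ℝ → Z) (hzU : ∀ t ∈ Set.Icc 0 τ, z t ∈ U)
    (hz : ∀ t ∈ Set.Icc 0 τ, z t = T t zbar + ∫ s in (0 : ℝ)..t, (T (t - s)) (g s)) :
    ∀ t ∈ Set.Icc 0 τ,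
      HasDerivWithinAt (fun s => V (z s)) (W (z t) (g t)) (Set.Icc 0 τ) t := by
  intro t₀ ht₀
  obtain ⟨g', hg'c, hg'g, hz'⟩ := exists_continuous_forcing_of_mild (ht₀.1.trans ht₀.2) hg hz
  have hzc := continuousOn_of_mild hTcont hg'c hz'
  set A := timeAverage hTcont
  have hVA : ∀ h > 0, ∀ s ∈ Icc 0 τ, A h (z s) ∈ U →
      HasDerivWithinAt (fun u => V (A h (z u))) (W (A h (z s)) (A h (g s))) (Icc s τ) s := by
    intro h hh s hs hsU
    have hd := hasDerivWithinAt_semigroup_timeAverage hTcont hTadd hh (z s)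
    have hsDB : A h (z s) ∈ U ∩ DB := ⟨hsU, (hDB _).2 ⟨_, hd⟩⟩
    have := (hDV _ hsDB).comp_hasDerivWithinAt s <| hasDerivWithinAt_apply_mild hT0 hTadd hTcont
      hg'c hz' (A h) (fun t ht y => timeAverage_apply_semigroup hTcont hTadd h ht y) hs
      (hBop _ hsDB.2)
    rwa [hVW _ hsDB, hg'g hs] at this
  have hpair : Tendsto (fun p : ℝ × ℝ => (A p.1 (z p.2), A p.1 (g p.2)))
      (𝓝[>] 0 ×ˢ 𝓝[Icc 0 τ] t₀) (𝓝 (z t₀, g t₀)) :=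
    ((tendsto_timeAverage hTcont hT0 (hzc t₀ ht₀)).prodMk_nhds
      (tendsto_timeAverage hTcont hT0 (hg t₀ ht₀))).mono_left
      (Filter.prod_mono nhdsWithin_le_nhds le_rfl)
  have hWt₀ : ContinuousAt (fun p : Z × Z => W p.1 p.2) (z t₀, g t₀) :=
    hWcont.continuousAt (prod_mem_nhds (hU.mem_nhds (hzU t₀ ht₀)) univ_mem)
  refine hasDerivWithinAt_of_tendsto_of_hasDerivWithinAt_Ici ordConnected_Icc ht₀
    (F := fun h u => V (A h (z u))) (G := fun h u => W (A h (z u)) (A h (g u)))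
    (fun t ht => (hVcont _ (hzU t ht)).tendsto.comp
      ((tendsto_timeAverage_apply hTcont hT0 (z t)).mono_left nhdsWithin_le_nhds))
    ?_ (hWt₀.tendsto.comp hpair)
  filter_upwards [(continuousAt_fst.tendsto.comp hpair).eventually (hU.mem_nhds (hzU t₀ ht₀)),
    prod_mem_prod self_mem_nhdsWithin self_mem_nhdsWithin] with ⟨h, u⟩ huU ⟨hh, hu⟩
  exact ⟨(hVcont _ huU).comp_continuousWithinAt (f := fun u => A h (z u))
    ((A h).continuous.continuousAt.comp_continuousWithinAt (hzc u hu)),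
    (hVA h hh u hu huU).mono fun v hv => ⟨hv.2, hv.1.2⟩⟩

/-- Differentiation of functionals along mild solutions of abstract
evolution equations. `(T t)_{t ≥ 0}` is a strongly continuous semigroup on a real Banach
space `Z` (formally `T t = e^{-Bt}`), `DB` is the generator domain and `Bop` the operator
`B`, characterized by right differentiability at `0`. If `V : U → Y` is continuous on the
open set `U`, Fréchet differentiable (with derivative `DV`) at points of `U ∩ DB`,
`W : U × Z → Y` is continuous and `DV z (-Bop z + w) = W z w` on `(U ∩ DB) × Z`, and
`z(t) = T t zbar + ∫₀ᵗ T (t-s) (g s) ds` on `I = [0, τ]` with `g` continuous and `z(I) ⊆ U`,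
then `V ∘ z` is differentiable on `I` with `(V ∘ z)'(t) = W (z t) (g t)`. -/
theorem stmt3 {Z Y : Type*}
    [NormedAddCommGroup Z] [NormedSpace ℝ Z] [CompleteSpace Z]
    [NormedAddCommGroup Y] [NormedSpace ℝ Y]
    (T : ℝ → Z →L[ℝ] Z)
    (hT0 : T 0 = ContinuousLinearMap.id ℝ Z)
    (hTadd : ∀ s t : ℝ, 0 ≤ s → 0 ≤ t → T (s + t) = (T s).comp (T t))
    (hTcont : ∀ z : Z, ContinuousOn (fun t => T t z) (Set.Ici (0 : ℝ)))
    (DB : Set Z) (Bop : Z → Z)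
    (hDB : ∀ z : Z, z ∈ DB ↔ ∃ d : Z, HasDerivWithinAt (fun t => T t z) d (Set.Ici (0 : ℝ)) 0)
    (hBop : ∀ z ∈ DB, HasDerivWithinAt (fun t => T t z) (-(Bop z)) (Set.Ici (0 : ℝ)) 0)
    (U : Set Z) (hU : IsOpen U)
    (V : Z → Y) (hVcont : ∀ z ∈ U, ContinuousAt V z)
    (DV : Z → Z →L[ℝ] Y) (hDV : ∀ z ∈ U ∩ DB, HasFDerivAt V (DV z) z)
    (W : Z → Z → Y)
    (hWcont : ContinuousOn (fun p : Z × Z => W p.1 p.2) (U ×ˢ (Set.univ : Set Z)))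
    (hVW : ∀ z ∈ U ∩ DB, ∀ w : Z, DV z (-(Bop z) + w) = W z w)
    (τ : ℝ) (hτ : 0 < τ) (zbar : Z) (hzbar : zbar ∈ U)
    (g : ℝ → Z) (hg : ContinuousOn g (Set.Icc 0 τ))
    (z : ℝ → Z) (hzU : ∀ t ∈ Set.Icc 0 τ, z t ∈ U)
    (hz : ∀ t ∈ Set.Icc 0 τ, z t = T t zbar + ∫ s in (0 : ℝ)..t, (T (t - s)) (g s)) :
    ∀ t ∈ Set.Icc 0 τ,
      HasDerivWithinAt (fun s => V (z s)) (W (z t) (g t)) (Set.Icc 0 τ) t :=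
  stmt3_general T hT0 hTadd hTcont DB Bop hDB hBop U hU V hVcont DV hDV W hWcont hVW τ zbar g hg z
    hzU hz
end

section
/- There exists a constant K ∈ [0,∞), depending only on C, such that for all measurable u, h : Ω → ℝ one has ‖F̂(u+h) − F̂(u)‖_{L¹} ≤ (‖f̂(0)‖_{L²} + K(‖u‖_{L²} + ‖h‖_{L²}) + K(‖u‖_{L⁶}³ + ‖h‖_{L⁶}³))·‖h‖_{L²}. -/
open MeasureTheory
open scoped ENNReal NNReal

/-!
Pointwise, `F(x, u + h) - F(x, u) = ∫ᵤ^{u+h} f(x, s) ds`, and the mean value theorem applied to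
`f(x, ·)` on `[-m, m]`, `m = |u| + |h|`, bounds the integrand by
`|f(x, 0)| + C (1 + m²) m`. Since `m³ ≤ 4 (|u|³ + |h|³)`, this gives
`|F(x, u + h) - F(x, u)| ≤ |h| G` with `G = |f(·, 0)| + K (|u| + |h|) + K (|u|³ + |h|³)`,
`K = 4 max C 0`.
Hölder's inequality `‖h G‖₁ ≤ ‖h‖₂ ‖G‖₂`, Minkowski's inequality and `‖|v|³‖₂ = ‖v‖₆³` conclude.
-/

section GrowthBound

variable {g : ℝ → ℝ} {C : ℝ≥0}

lemma abs_le_of_abs_deriv_le (hg : Differentiable ℝ g)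
    (hd : ∀ s, |deriv g s| ≤ C * (1 + |s| ^ 2)) {m s : ℝ} (hs : |s| ≤ m) :
    |g s| ≤ |g 0| + C * (1 + m ^ 2) * m := by
  have hm : 0 ≤ m := (abs_nonneg s).trans hs
  have hderiv : ∀ t ∈ Set.Icc (-m) m, ‖deriv g t‖ ≤ C * (1 + m ^ 2) := fun t ht =>
    calc ‖deriv g t‖ ≤ C * (1 + |t| ^ 2) := hd t
      _ ≤ C * (1 + m ^ 2) := by gcongr; exact abs_le.2 ht
  have hmvt := (convex_Icc (-m) m).norm_image_sub_le_of_norm_deriv_le (fun t _ => hg t) hderiv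
    ⟨neg_nonpos.2 hm, hm⟩ (abs_le.1 hs)
  rw [sub_zero, Real.norm_eq_abs, Real.norm_eq_abs] at hmvt
  calc |g s| ≤ |g 0| + |g s - g 0| := by linarith [abs_sub_abs_le_abs_sub (g s) (g 0)]
    _ ≤ |g 0| + C * (1 + m ^ 2) * m := by gcongr; exact hmvt.trans (by gcongr)

lemma abs_intervalIntegral_add_le (hg : Differentiable ℝ g)
    (hd : ∀ s, |deriv g s| ≤ C * (1 + |s| ^ 2)) (a b : ℝ) :
    |∫ s in a..a + b, g s| ≤
      |b| * (|g 0| + 4 * C * (|a| + |b|) + 4 * C * (|a| ^ 3 + |b| ^ 3)) := by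
  set m := |a| + |b|
  have hbound : ∀ s ∈ Set.uIoc a (a + b), ‖g s‖ ≤ |g 0| + C * (1 + m ^ 2) * m := fun s hs => by
    have hsa : |s - a| ≤ |b| := by
      simpa using Set.abs_sub_left_of_mem_uIcc (Set.uIoc_subset_uIcc hs)
    refine abs_le_of_abs_deriv_le hg hd ?_
    linarith [abs_sub_abs_le_abs_sub s a]
  have hcube : m ^ 3 ≤ 4 * (|a| ^ 3 + |b| ^ 3) :=
    (add_pow_le (abs_nonneg a) (abs_nonneg b) 3).trans_eq (by norm_num)
  have hC : (0 : ℝ) ≤ C := C.coe_nonneg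
  calc |∫ s in a..a + b, g s| ≤ (|g 0| + C * (1 + m ^ 2) * m) * |a + b - a| :=
        intervalIntegral.norm_integral_le_of_norm_le_const hbound
    _ = |b| * (|g 0| + C * m + C * m ^ 3) := by rw [add_sub_cancel_left]; ring
    _ ≤ _ := by
      have hm : 0 ≤ m := by positivity
      gcongr |b| * (_ + ?_ + ?_)
      · nlinarith
      · nlinarith

end GrowthBound

section LpBounds

variable {α : Type*} [MeasurableSpace α] {μ : Measure α}

lemma eLpNorm_le_mul_of_ae_norm_le_mul {𝕜 E F : Type*} [NormedField 𝕜] [NormedAddCommGroup E]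
    [NormedSpace 𝕜 E] [NormedAddCommGroup F] {p q r : ℝ≥0∞} [p.HolderTriple q r]
    {φ : α → F} {f : α → 𝕜} {g : α → E}
    (hf : AEStronglyMeasurable f μ) (hg : AEStronglyMeasurable g μ)
    (h : ∀ᵐ x ∂μ, ‖φ x‖ ≤ ‖f x‖ * ‖g x‖) :
    eLpNorm φ r μ ≤ eLpNorm f p μ * eLpNorm g q μ :=
  (eLpNorm_mono_ae (h.mono fun x hx => hx.trans (norm_smul (f x) (g x)).ge)).trans
    (eLpNorm_smul_le_mul_eLpNorm hg hf)

lemma eLpNorm_norm_pow {E : Type*} [NormedAddCommGroup E] (v : α → E) (p : ℝ≥0∞) {n : ℕ}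
    (hn : n ≠ 0) : eLpNorm (fun x => ‖v x‖ ^ n) p μ = eLpNorm v (p * n) μ ^ n := by
  have := eLpNorm_norm_rpow v (p := p) (μ := μ) (Nat.cast_pos.2 (Nat.pos_of_ne_zero hn))
  simpa [Real.rpow_natCast, ENNReal.rpow_natCast] using this

variable {u h : α → ℝ}

lemma eLpNorm_abs_pow_add_abs_pow_le (hu : AEStronglyMeasurable u μ)
    (hh : AEStronglyMeasurable h μ) {p : ℝ≥0∞} (hp : 1 ≤ p) {n : ℕ} (hn : n ≠ 0) :
    eLpNorm (fun x => |u x| ^ n + |h x| ^ n) p μ ≤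
      eLpNorm u (p * n) μ ^ n + eLpNorm h (p * n) μ ^ n := by
  calc _ ≤ eLpNorm (fun x => ‖u x‖ ^ n) p μ + eLpNorm (fun x => ‖h x‖ ^ n) p μ :=
        eLpNorm_add_le (hu.norm.pow n) (hh.norm.pow n) hp
    _ = _ := by rw [eLpNorm_norm_pow u p hn, eLpNorm_norm_pow h p hn]

lemma eLpNorm_growth_bound_le {φ : α → ℝ} (hφ : AEStronglyMeasurable φ μ)
    (hu : AEStronglyMeasurable u μ) (hh : AEStronglyMeasurable h μ) (K : ℝ≥0) :
    eLpNorm (fun x => |φ x| + K * (|u x| + |h x|) + K * (|u x| ^ 3 + |h x| ^ 3)) 2 μ ≤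
      eLpNorm φ 2 μ + K * (eLpNorm u 2 μ + eLpNorm h 2 μ)
        + K * (eLpNorm u 6 μ ^ 3 + eLpNorm h 6 μ ^ 3) := by
  have hK : ∀ v : α → ℝ, eLpNorm (fun x => (K : ℝ) * v x) 2 μ = K * eLpNorm v 2 μ := fun v =>
    (eLpNorm_const_smul (K : ℝ) v 2 μ).trans (by simp)
  have hlin : eLpNorm (fun x => |u x| + |h x|) 2 μ ≤ eLpNorm u 2 μ + eLpNorm h 2 μ := by
    simpa using eLpNorm_abs_pow_add_abs_pow_le hu hh one_le_two one_ne_zero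
  have hcub : eLpNorm (fun x => |u x| ^ 3 + |h x| ^ 3) 2 μ ≤
      eLpNorm u 6 μ ^ 3 + eLpNorm h 6 μ ^ 3 := by
    have := eLpNorm_abs_pow_add_abs_pow_le hu hh one_le_two three_ne_zero
    norm_num at this
    exact this
  have habs : eLpNorm (fun x => |φ x|) 2 μ = eLpNorm φ 2 μ := eLpNorm_norm φ
  have m₁ : AEStronglyMeasurable (fun x => |φ x|) μ := hφ.norm
  have m₂ : AEStronglyMeasurable (fun x => (K : ℝ) * (|u x| + |h x|)) μ :=
    (hu.norm.add hh.norm).const_mul _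
  have m₃ : AEStronglyMeasurable (fun x => (K : ℝ) * (|u x| ^ 3 + |h x| ^ 3)) μ :=
    ((hu.norm.pow 3).add (hh.norm.pow 3)).const_mul _
  calc _ ≤ eLpNorm (fun x => |φ x|) 2 μ + eLpNorm (fun x => (K : ℝ) * (|u x| + |h x|)) 2 μ
          + eLpNorm (fun x => (K : ℝ) * (|u x| ^ 3 + |h x| ^ 3)) 2 μ :=
        (eLpNorm_add_le (m₁.add m₂) m₃ one_le_two).trans
          (by gcongr; exact eLpNorm_add_le m₁ m₂ one_le_two)
    _ ≤ _ := by
      rw [hK, hK, habs]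
      gcongr

end LpBounds

theorem stmt8_general (Ω : Set (Fin 3 → ℝ))
    (f : (Fin 3 → ℝ) → ℝ → ℝ)
    (hmeas : ∀ u : ℝ, Measurable fun x => f x u)
    (C : ℝ)
    (hf : ∀ᵐ x ∂(volume.restrict Ω),
      ContDiff ℝ 1 (f x) ∧ ∀ u : ℝ, |deriv (f x) u| ≤ C * (1 + |u| ^ 2))
    (F : (Fin 3 → ℝ) → ℝ → ℝ)
    (hF : ∀ (x : Fin 3 → ℝ) (u : ℝ),
      (Continuous (f x) → F x u = ∫ s in (0 : ℝ)..u, f x s) ∧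
      (¬ Continuous (f x) → F x u = 0)) :
    ∃ K : ℝ≥0, ∀ u h : (Fin 3 → ℝ) → ℝ, Measurable u → Measurable h →
      eLpNorm (fun x => F x (u x + h x) - F x (u x)) 1 (volume.restrict Ω) ≤
        (eLpNorm (fun x => f x 0) 2 (volume.restrict Ω)
            + (K : ℝ≥0∞) * (eLpNorm u 2 (volume.restrict Ω)
                + eLpNorm h 2 (volume.restrict Ω))
            + (K : ℝ≥0∞) * (eLpNorm u 6 (volume.restrict Ω) ^ 3
                + eLpNorm h 6 (volume.restrict Ω) ^ 3))
          * eLpNorm h 2 (volume.restrict Ω) := by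
  refine ⟨4 * C.toNNReal, fun u h hu hh => ?_⟩
  set K : ℝ≥0 := 4 * C.toNNReal
  set G : (Fin 3 → ℝ) → ℝ := fun x => |f x 0| + K * (|u x| + |h x|) + K * (|u x| ^ 3 + |h x| ^ 3)
  have hpointwise : ∀ᵐ x ∂(volume.restrict Ω),
      ‖F x (u x + h x) - F x (u x)‖ ≤ ‖h x‖ * ‖G x‖ := by
    filter_upwards [hf] with x ⟨hc, hd⟩
    have hd' : ∀ s, |deriv (f x) s| ≤ C.toNNReal * (1 + |s| ^ 2) := fun s =>
      (hd s).trans (by gcongr; exact C.le_coe_toNNReal)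
    have hint := hc.continuous.intervalIntegrable (μ := volume)
    rw [(hF x _).1 hc.continuous, (hF x _).1 hc.continuous,
      intervalIntegral.integral_interval_sub_left (hint _ _) (hint _ _)]
    calc _ ≤ ‖h x‖ * G x := by
          simpa [G, K] using
            abs_intervalIntegral_add_le (hc.differentiable one_ne_zero) hd' (u x) (h x)
      _ ≤ _ := by gcongr; exact le_abs_self _
  calc _ ≤ eLpNorm h 2 (volume.restrict Ω) * eLpNorm G 2 (volume.restrict Ω) :=
        eLpNorm_le_mul_of_ae_norm_le_mul hh.aestronglyMeasurable (by fun_prop) hpointwise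
    _ ≤ _ := by
      rw [mul_comm]
      gcongr
      exact eLpNorm_growth_bound_le (hmeas 0).aestronglyMeasurable hu.aestronglyMeasurable
        hh.aestronglyMeasurable K

/-- With `F(x,u) = ∫₀ᵘ f(x,s) ds` whenever `f(x,·)` is continuous and
`F(x,u) = 0` otherwise, under the growth assumption `|∂_u f(x,u)| ≤ C (1+|u|²)` a.e. on
`Ω`, there is a constant `K ∈ [0,∞)` depending only on `C` such that for all measurable
`u, h : Ω → ℝ` one has
`‖F̂(u+h) − F̂(u)‖_{L¹} ≤ (‖f̂(0)‖_{L²} + K(‖u‖_{L²} + ‖h‖_{L²}) + K(‖u‖_{L⁶}³ + ‖h‖_{L⁶}³)) ‖h‖_{L²}`. -/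
theorem stmt8 (Ω : Set (Fin 3 → ℝ)) (hΩ : IsOpen Ω)
    (f : (Fin 3 → ℝ) → ℝ → ℝ)
    (hmeas : ∀ u : ℝ, Measurable fun x => f x u)
    (C : ℝ) (hC : 0 ≤ C)
    (hf : ∀ᵐ x ∂(volume.restrict Ω),
      ContDiff ℝ 1 (f x) ∧ ∀ u : ℝ, |deriv (f x) u| ≤ C * (1 + |u| ^ 2))
    (F : (Fin 3 → ℝ) → ℝ → ℝ)
    (hF : ∀ (x : Fin 3 → ℝ) (u : ℝ),
      (Continuous (f x) → F x u = ∫ s in (0 : ℝ)..u, f x s) ∧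
      (¬ Continuous (f x) → F x u = 0)) :
    ∃ K : ℝ≥0, ∀ u h : (Fin 3 → ℝ) → ℝ, Measurable u → Measurable h →
      eLpNorm (fun x => F x (u x + h x) - F x (u x)) 1 (volume.restrict Ω) ≤
        (eLpNorm (fun x => f x 0) 2 (volume.restrict Ω)
            + (K : ℝ≥0∞) * (eLpNorm u 2 (volume.restrict Ω)
                + eLpNorm h 2 (volume.restrict Ω))
            + (K : ℝ≥0∞) * (eLpNorm u 6 (volume.restrict Ω) ^ 3
                + eLpNorm h 6 (volume.restrict Ω) ^ 3))
          * eLpNorm h 2 (volume.restrict Ω) :=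
  stmt8_general Ω f hmeas C hf F hF
end

section
/- There exists a constant K ∈ [0,∞), depending only on C, such that for all measurable u, h : Ω → ℝ one has ‖F̂(u+h) − F̂(u) − f̂(u)·h‖_{L¹} ≤ (K‖h‖_{L²} + K(‖u‖_{L⁶}² + ‖h‖_{L⁶}²)·‖h‖_{L⁶})·‖h‖_{L²}, where f̂(u)·h denotes the pointwise product x ↦ f(x,u(x))·h(x). -/
/-!
Since `F x` is a primitive of `f x`, the integrand is the first-order Taylor remainder
`∫_u^{u+h} (f x s - f x u) ds`; the mean value theorem and the growth bound on `∂_u f` make it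
at most `2C (1 + u² + h²) h²` pointwise. Integrating, `h²` contributes `‖h‖₂²`, and
`((u² + h²) h) h` is estimated by Hölder with `1 = 1/2 + 1/2` and `1/2 = 1/3 + 1/6`,
using `‖u²‖₃ = ‖u‖₆²`.
-/

open MeasureTheory intervalIntegral
open scoped ENNReal NNReal

lemma abs_integral_sub_mul_le_of_abs_deriv_le {g : ℝ → ℝ} (hg : Differentiable ℝ g)
    {a b M : ℝ} (hM : ∀ t ∈ Set.uIcc a (a + b), |deriv g t| ≤ M) :
    |(∫ s in a..a + b, g s) - g a * b| ≤ M * b ^ 2 := by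
  have hM₀ : 0 ≤ M := (abs_nonneg _).trans (hM a Set.left_mem_uIcc)
  have hlip : ∀ s ∈ Set.uIoc a (a + b), ‖g s - g a‖ ≤ M * |b| := by
    intro s hs
    have hs' := Set.uIoc_subset_uIcc hs
    calc ‖g s - g a‖ ≤ M * ‖s - a‖ :=
          (convex_uIcc a (a + b)).norm_image_sub_le_of_norm_deriv_le
            (fun t _ => hg t) hM Set.left_mem_uIcc hs'
      _ ≤ M * |b| := by
          gcongr
          simpa using Set.abs_sub_left_of_mem_uIcc hs'
  have hint := norm_integral_le_of_norm_le_const hlip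
  rw [add_sub_cancel_left, integral_sub (hg.continuous.intervalIntegrable _ _)
    intervalIntegrable_const, intervalIntegral.integral_const, add_sub_cancel_left,
    smul_eq_mul] at hint
  calc |(∫ s in a..a + b, g s) - g a * b| ≤ M * |b| * |b| := by simpa [mul_comm b] using hint
    _ = M * b ^ 2 := by rw [mul_assoc, ← sq, sq_abs]

lemma abs_primitive_remainder_le_of_abs_deriv_le_quadratic {g : ℝ → ℝ}
    (hg : Differentiable ℝ g) {C : ℝ} (hd : ∀ t, |deriv g t| ≤ C * (1 + |t| ^ 2))
    (a b : ℝ) :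
    |(∫ s in (0 : ℝ)..a + b, g s) - (∫ s in (0 : ℝ)..a, g s) - g a * b|
      ≤ 2 * C * ((1 + a ^ 2 + b ^ 2) * b ^ 2) := by
  have hC : 0 ≤ C := by simpa using (abs_nonneg _).trans (hd 0)
  have hM : ∀ t ∈ Set.uIcc a (a + b), |deriv g t| ≤ 2 * C * (1 + a ^ 2 + b ^ 2) := by
    intro t ht
    have ht' : |t| ≤ |a| + |b| :=
      calc |t| = |a + (t - a)| := by rw [add_sub_cancel]
        _ ≤ |a| + |t - a| := abs_add_le _ _
        _ ≤ |a| + |b| := by simpa using Set.abs_sub_left_of_mem_uIcc ht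
    calc |deriv g t| ≤ C * (1 + |t| ^ 2) := hd t
      _ ≤ C * (1 + (|a| + |b|) ^ 2) := by gcongr
      _ ≤ 2 * C * (1 + a ^ 2 + b ^ 2) := by
          nlinarith [sq_nonneg (|a| - |b|), sq_abs a, sq_abs b]
  rw [integral_interval_sub_left (hg.continuous.intervalIntegrable _ _)
    (hg.continuous.intervalIntegrable _ _), ← mul_assoc]
  exact abs_integral_sub_mul_le_of_abs_deriv_le hg hM

section Lp

variable {α : Type*} [MeasurableSpace α] {μ : Measure α}

lemma eLpNorm_sq (w : α → ℝ) (p : ℝ≥0∞) :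
    eLpNorm (fun x => w x ^ 2) p μ = eLpNorm w (p * 2) μ ^ 2 := by
  have h := eLpNorm_norm_rpow (p := p) (μ := μ) w (q := (2:ℝ)) (by norm_num)
  simp only [Real.norm_eq_abs, Real.rpow_two, sq_abs, ENNReal.ofReal_ofNat] at h
  rw [h, ← ENNReal.rpow_natCast _ 2]
  norm_num

instance ENNReal.holderTriple_three_six_two : ENNReal.HolderTriple 3 6 2 where
  inv_add_inv_eq_inv := by
    rw [← ENNReal.toReal_eq_toReal_iff' (by simp) (by simp),
      ENNReal.toReal_add (by simp) (by simp)]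
    norm_num

lemma eLpNorm_one_add_sq_add_sq_mul_sq_le {u h : α → ℝ} (hu : AEStronglyMeasurable u μ)
    (hh : AEStronglyMeasurable h μ) :
    eLpNorm (fun x => (1 + u x ^ 2 + h x ^ 2) * h x ^ 2) 1 μ ≤
      (eLpNorm h 2 μ + (eLpNorm u 6 μ ^ 2 + eLpNorm h 6 μ ^ 2) * eLpNorm h 6 μ)
        * eLpNorm h 2 μ := by
  set ψ : α → ℝ := fun x => u x ^ 2 + h x ^ 2
  have hψ : AEStronglyMeasurable ψ μ := (hu.pow 2).add (hh.pow 2)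
  have hsplit :
      (fun x => (1 + u x ^ 2 + h x ^ 2) * h x ^ 2) = (fun x => h x ^ 2) + (ψ • h) • h := by
    ext x; simp only [Pi.add_apply, Pi.mul_apply, smul_eq_mul, ψ]; ring
  have hψ₃ : eLpNorm ψ 3 μ ≤ eLpNorm u 6 μ ^ 2 + eLpNorm h 6 μ ^ 2 := by
    calc eLpNorm ψ 3 μ ≤ eLpNorm (fun x => u x ^ 2) 3 μ + eLpNorm (fun x => h x ^ 2) 3 μ :=
          eLpNorm_add_le (hu.pow 2) (hh.pow 2) (by norm_num)
      _ = eLpNorm u 6 μ ^ 2 + eLpNorm h 6 μ ^ 2 := by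
          rw [eLpNorm_sq, eLpNorm_sq]; norm_num
  calc eLpNorm (fun x => (1 + u x ^ 2 + h x ^ 2) * h x ^ 2) 1 μ
      ≤ eLpNorm (fun x => h x ^ 2) 1 μ + eLpNorm ((ψ • h) • h) 1 μ := by
        rw [hsplit]; exact eLpNorm_add_le (hh.pow 2) ((hψ.smul hh).smul hh) le_rfl
    _ ≤ eLpNorm h 2 μ ^ 2 + eLpNorm ψ 3 μ * eLpNorm h 6 μ * eLpNorm h 2 μ := by
        rw [eLpNorm_sq, one_mul]
        gcongr
        calc eLpNorm ((ψ • h) • h) 1 μ ≤ eLpNorm (ψ • h) 2 μ * eLpNorm h 2 μ :=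
              eLpNorm_smul_le_mul_eLpNorm hh (hψ.smul hh)
          _ ≤ eLpNorm ψ 3 μ * eLpNorm h 6 μ * eLpNorm h 2 μ := by
              gcongr; exact eLpNorm_smul_le_mul_eLpNorm hh hψ
    _ ≤ (eLpNorm h 2 μ + (eLpNorm u 6 μ ^ 2 + eLpNorm h 6 μ ^ 2) * eLpNorm h 6 μ)
          * eLpNorm h 2 μ := by
        rw [add_mul, sq]; gcongr

end Lp

theorem stmt9_general (Ω : Set (Fin 3 → ℝ))
    (f : (Fin 3 → ℝ) → ℝ → ℝ)
    (C : ℝ)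
    (hf : ∀ᵐ x ∂(volume.restrict Ω),
      ContDiff ℝ 1 (f x) ∧ ∀ u : ℝ, |deriv (f x) u| ≤ C * (1 + |u| ^ 2))
    (F : (Fin 3 → ℝ) → ℝ → ℝ)
    (hF : ∀ (x : Fin 3 → ℝ) (u : ℝ),
      (Continuous (f x) → F x u = ∫ s in (0 : ℝ)..u, f x s) ∧
      (¬ Continuous (f x) → F x u = 0)) :
    ∃ K : ℝ≥0, ∀ u h : (Fin 3 → ℝ) → ℝ, Measurable u → Measurable h →
      eLpNorm (fun x => F x (u x + h x) - F x (u x) - f x (u x) * h x) 1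
          (volume.restrict Ω) ≤
        ((K : ℝ≥0∞) * eLpNorm h 2 (volume.restrict Ω)
            + (K : ℝ≥0∞) * (eLpNorm u 6 (volume.restrict Ω) ^ 2
                + eLpNorm h 6 (volume.restrict Ω) ^ 2)
              * eLpNorm h 6 (volume.restrict Ω))
          * eLpNorm h 2 (volume.restrict Ω) := by
  set μ := volume.restrict Ω
  set K := (2 * C).toNNReal
  refine ⟨K, fun u h hu hh => ?_⟩
  have hpt : ∀ᵐ x ∂μ, ‖F x (u x + h x) - F x (u x) - f x (u x) * h x‖
      ≤ ‖((K : ℝ) • fun x => (1 + u x ^ 2 + h x ^ 2) * h x ^ 2) x‖ := by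
    filter_upwards [hf] with x ⟨hfx, hdx⟩
    have hcont := hfx.continuous
    rw [(hF x _).1 hcont, (hF x _).1 hcont, Pi.smul_apply, smul_eq_mul, Real.norm_eq_abs,
      Real.norm_eq_abs, abs_of_nonneg (a := (K : ℝ) * _) (by positivity)]
    exact (abs_primitive_remainder_le_of_abs_deriv_le_quadratic (hfx.differentiable one_ne_zero)
      hdx _ _).trans (by gcongr; exact Real.le_coe_toNNReal _)
  calc _ ≤ (K : ℝ≥0∞) * eLpNorm (fun x => (1 + u x ^ 2 + h x ^ 2) * h x ^ 2) 1 μ := by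
        rw [← NNReal.enorm_eq, ← eLpNorm_const_smul]
        exact eLpNorm_mono_ae hpt
    _ ≤ (K : ℝ≥0∞) * ((eLpNorm h 2 μ
          + (eLpNorm u 6 μ ^ 2 + eLpNorm h 6 μ ^ 2) * eLpNorm h 6 μ) * eLpNorm h 2 μ) := by
        gcongr
        exact eLpNorm_one_add_sq_add_sq_mul_sq_le hu.aestronglyMeasurable hh.aestronglyMeasurable
    _ = _ := by ring

/-- With `F(x,u) = ∫₀ᵘ f(x,s) ds` whenever `f(x,·)` is continuous and
`F(x,u) = 0` otherwise, under the growth assumption `|∂_u f(x,u)| ≤ C (1+|u|²)` a.e. on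
`Ω`, there is a constant `K ∈ [0,∞)` depending only on `C` such that for all measurable
`u, h : Ω → ℝ` one has
`‖F̂(u+h) − F̂(u) − f̂(u)·h‖_{L¹} ≤ (K‖h‖_{L²} + K(‖u‖_{L⁶}² + ‖h‖_{L⁶}²)‖h‖_{L⁶}) ‖h‖_{L²}`. -/
theorem stmt9 (Ω : Set (Fin 3 → ℝ)) (hΩ : IsOpen Ω)
    (f : (Fin 3 → ℝ) → ℝ → ℝ)
    (hmeas : ∀ u : ℝ, Measurable fun x => f x u)
    (C : ℝ) (hC : 0 ≤ C)
    (hf : ∀ᵐ x ∂(volume.restrict Ω),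
      ContDiff ℝ 1 (f x) ∧ ∀ u : ℝ, |deriv (f x) u| ≤ C * (1 + |u| ^ 2))
    (F : (Fin 3 → ℝ) → ℝ → ℝ)
    (hF : ∀ (x : Fin 3 → ℝ) (u : ℝ),
      (Continuous (f x) → F x u = ∫ s in (0 : ℝ)..u, f x s) ∧
      (¬ Continuous (f x) → F x u = 0)) :
    ∃ K : ℝ≥0, ∀ u h : (Fin 3 → ℝ) → ℝ, Measurable u → Measurable h →
      eLpNorm (fun x => F x (u x + h x) - F x (u x) - f x (u x) * h x) 1
          (volume.restrict Ω) ≤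
        ((K : ℝ≥0∞) * eLpNorm h 2 (volume.restrict Ω)
            + (K : ℝ≥0∞) * (eLpNorm u 6 (volume.restrict Ω) ^ 2
                + eLpNorm h 6 (volume.restrict Ω) ^ 2)
              * eLpNorm h 6 (volume.restrict Ω))
          * eLpNorm h 2 (volume.restrict Ω) :=
  stmt9_general Ω f C hf F hF
end

section
/- Let k > 0 and C₁, C₂ ∈ [0,∞). Let α : ℝ → ℝ be differentiable and β : ℝ → ℝ be continuous and nonnegative, and assume that α'(t) + k·α(t) ≤ C₁·β(t) for every t ∈ ℝ, and that ∫_{t₀}^{t} β(s) ds ≤ C₂ for all t₀, t ∈ ℝ with t₀ ≤ t. Then for all t₀ ≤ t one has α(t) ≤ e^{−k(t−t₀)} α(t₀) + C₁C₂/(1 − e^{−k}). -/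
/-! Multiplying by the integrating factor `e^{-k(t-s)}` turns the differential inequality into
the Duhamel bound `α t ≤ e^{-k(t-t₀)} α t₀ + C₁ ∫_{t₀}^{t} e^{-k(t-s)} β s ds`. Since `β ≥ 0` and
the weight is at most `1`, the integral is at most `∫_{t₀}^{t} β ≤ C₂`; this gives the bound with
the constant `C₁ C₂`, which is at most `C₁ C₂ / (1 - e^{-k})`. -/

open MeasureTheory intervalIntegral Real

theorem le_exp_mul_add_integral_of_deriv_add_mul_le {k : ℝ} {α g : ℝ → ℝ}
    (hα : Differentiable ℝ α) (hg : Continuous g) (h : ∀ s, deriv α s + k * α s ≤ g s)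
    {t₀ t : ℝ} (ht : t₀ ≤ t) :
    α t ≤ exp (-k * (t - t₀)) * α t₀ + ∫ s in t₀..t, exp (-k * (t - s)) * g s := by
  have hweight : ∀ s, HasDerivAt (fun s => exp (-k * (t - s))) (exp (-k * (t - s)) * k) s := by
    intro s
    simpa using (((hasDerivAt_id s).const_sub t).const_mul (-k)).exp
  have hG : ∀ s, HasDerivAt (fun s => exp (-k * (t - s)) * α s)
      (exp (-k * (t - s)) * (deriv α s + k * α s)) s := by
    intro s
    exact ((hweight s).mul (hα s).hasDerivAt).congr_deriv (by ring)
  have hle := sub_le_integral_of_hasDeriv_right_of_le ht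
    (Continuous.continuousOn (continuous_iff_continuousAt.2 fun s => (hG s).continuousAt))
    (fun s _ => (hG s).hasDerivWithinAt)
    (by fun_prop : Continuous fun s => exp (-k * (t - s)) * g s).integrableOn_Icc
    (fun s _ => mul_le_mul_of_nonneg_left (h s) (exp_pos _).le)
  simp only [sub_self, mul_zero, exp_zero, one_mul] at hle
  linarith

theorem integral_exp_mul_le_integral {k : ℝ} (hk : 0 ≤ k) {g : ℝ → ℝ} (hg : Continuous g)
    (hg0 : ∀ s, 0 ≤ g s) {t₀ t : ℝ} (ht : t₀ ≤ t) :
    ∫ s in t₀..t, exp (-k * (t - s)) * g s ≤ ∫ s in t₀..t, g s := by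
  refine integral_mono_on ht
    ((by fun_prop : Continuous fun s => exp (-k * (t - s)) * g s).intervalIntegrable _ _)
    (hg.intervalIntegrable _ _) fun s hs => ?_
  have hweight : exp (-k * (t - s)) ≤ 1 :=
    exp_le_one_iff.2 (mul_nonpos_of_nonpos_of_nonneg (neg_nonpos.2 hk) (sub_nonneg.2 hs.2))
  simpa using mul_le_mul_of_nonneg_right hweight (hg0 s)

theorem le_div_one_sub_exp_neg {k c : ℝ} (hk : 0 < k) (hc : 0 ≤ c) : c ≤ c / (1 - exp (-k)) :=
  le_div_self hc (by simpa using exp_lt_one_iff.2 (neg_neg_of_pos hk))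
    (by linarith [(exp_pos (-k)).le])

/-- Gronwall-type decay estimate: if `α' (t) + k α(t) ≤ C₁ β(t)` for all
`t`, with `k > 0`, `β` continuous and nonnegative, and `∫_{t₀}^{t} β ≤ C₂` for all
`t₀ ≤ t`, then `α(t) ≤ e^{−k(t−t₀)} α(t₀) + C₁ C₂ / (1 − e^{−k})` for all `t₀ ≤ t`. -/
theorem stmt11 (k : ℝ) (hk : 0 < k) (C₁ C₂ : ℝ) (hC₁ : 0 ≤ C₁) (hC₂ : 0 ≤ C₂)
    (α β : ℝ → ℝ) (hα : Differentiable ℝ α)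
    (hβc : Continuous β) (hβ0 : ∀ t, 0 ≤ β t)
    (hineq : ∀ t : ℝ, deriv α t + k * α t ≤ C₁ * β t)
    (hint : ∀ t₀ t : ℝ, t₀ ≤ t → (∫ s in t₀..t, β s) ≤ C₂) :
    ∀ t₀ t : ℝ, t₀ ≤ t →
      α t ≤ Real.exp (-k * (t - t₀)) * α t₀ + C₁ * C₂ / (1 - Real.exp (-k)) := by
  intro t₀ t ht
  have hduhamel := 
    le_exp_mul_add_integral_of_deriv_add_mul_le (g := fun s => C₁ * β s) hα (by fun_prop) hineq ht
  have hforcing : ∫ s in t₀..t, exp (-k * (t - s)) * (C₁ * β s) ≤ C₁ * C₂ :=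
    calc ∫ s in t₀..t, exp (-k * (t - s)) * (C₁ * β s)
        ≤ ∫ s in t₀..t, C₁ * β s :=
          integral_exp_mul_le_integral hk.le (by fun_prop)
            (fun s => mul_nonneg hC₁ (hβ0 s)) ht
      _ = C₁ * ∫ s in t₀..t, β s := integral_const_mul _ _
      _ ≤ C₁ * C₂ := mul_le_mul_of_nonneg_left (hint t₀ t ht) hC₁
  linarith [le_div_one_sub_exp_neg hk (mul_nonneg hC₁ hC₂)]
end
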